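/- For every natural number k, the characteristic polynomial of the dimer hopping matrix H_k equals ∏_{m=0}^{k} (X − (2m − k)); in particular the eigenvalues of H_k are exactly −k, −k+2, −k+4, …, k−2, k. -/

import Mathlib

/-!
Conjugating `H_k` by the diagonal matrix `diag (√(k choose a))` gives the Sylvester–Kac matrix,
which is the matrix, in the monomial basis of the polynomials of degree `≤ k`, of the operator
`L p = (1 - X²) p' + k X p`. A direct computation shows `L ((1 + X)^m (1 - X)^(k-m)) =
(2m - k) (1 + X)^m (1 - X)^(k-m)`, so the `k + 1` distinct numbers `2m - k` are eigenvalues;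
they are therefore all the roots of the monic characteristic polynomial of degree `k + 1`.
-/

open Matrix

/-- The dimer hopping matrix `H_k` restricted to the `k`-particle subspace:
a `(k+1) × (k+1)` symmetric tridiagonal matrix with off-diagonal entries
`√((α+1)(k−α))`. -/
noncomputable def hopH (k : ℕ) : Matrix (Fin (k+1)) (Fin (k+1)) ℝ :=
  fun α β =>
    if (α : ℕ) + 1 = (β : ℕ) then Real.sqrt ((((α : ℕ) + 1) * (k - (α : ℕ)) : ℕ))
    else if (β : ℕ) + 1 = (α : ℕ) then Real.sqrt ((((β : ℕ) + 1) * (k - (β : ℕ)) : ℕ))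
    else 0

open Polynomial

theorem Matrix.charpoly_eq_prod_of_mulVec_eq_smul {K n : Type*} [Field K] [Fintype n]
    [DecidableEq n] (A : Matrix n n K) {μ : n → K} (hμ : Function.Injective μ)
    (v : n → n → K) (hv0 : ∀ i, v i ≠ 0) (hv : ∀ i, A *ᵥ v i = μ i • v i) :
    A.charpoly = ∏ i, (X - C (μ i)) := by
  have hroot (i : n) : A.charpoly.IsRoot (μ i) := by
    rw [IsRoot, eval_charpoly, ← exists_mulVec_eq_zero_iff]
    exact ⟨v i, hv0 i, by ext; simp [sub_mulVec, hv]⟩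
  have hdvd : ∏ i, (X - C (μ i)) ∣ A.charpoly :=
    Finset.prod_dvd_of_coprime (fun i _ j _ hij => pairwise_coprime_X_sub_C hμ hij)
      fun i _ => dvd_iff_isRoot.mpr (hroot i)
  refine eq_of_monic_of_dvd_of_natDegree_le (monic_prod_of_monic _ _ fun i _ => monic_X_sub_C _)
    A.charpoly_monic hdvd ?_
  simp [charpoly_natDegree_eq_dim]

theorem Matrix.charpoly_diagonal_inv_mul_mul_diagonal {K n : Type*} [Field K] [Fintype n]
    [DecidableEq n] (A : Matrix n n K) {d : n → K} (hd : ∀ i, d i ≠ 0) :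
    (diagonal d⁻¹ * A * diagonal d).charpoly = A.charpoly := by
  rw [charpoly_mul_comm, ← mul_assoc, diagonal_mul_diagonal]
  simp [hd]

theorem Polynomial.mulVec_coeff_eq_coeff_linearMap_apply {R : Type*} [CommRing R]
    (L : R[X] →ₗ[R] R[X]) {n : ℕ} {p : R[X]} (hp : p.natDegree < n) :
    (of fun a b : Fin n => (L (X ^ (b : ℕ))).coeff a) *ᵥ (fun b => p.coeff b)
      = fun a : Fin n => (L p).coeff a := by
  ext a
  conv_rhs => rw [p.as_sum_range' n hp]
  simp only [mulVec, dotProduct, of_apply, map_sum, finsetSum_coeff, ← C_mul_X_pow_eq_monomial,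
    ← smul_eq_C_mul, map_smul, coeff_smul, smul_eq_mul]
  rw [Fin.sum_univ_eq_sum_range (fun b => (L (X ^ b)).coeff a * p.coeff b)]
  simp only [mul_comm]

section Kac

variable {R : Type*} [CommRing R]

noncomputable def kacOperator (k : ℕ) : R[X] →ₗ[R] R[X] :=
  LinearMap.mulLeft R (1 - X ^ 2) ∘ₗ derivative + LinearMap.mulLeft R (C (k : R) * X)

lemma kacOperator_apply (k : ℕ) (p : R[X]) :
    kacOperator k p = (1 - X ^ 2) * derivative p + C (k : R) * X * p := rfl

-- For `b = 0` the first term vanishes, so the truncated `b - 1` is harmless.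
lemma kacOperator_X_pow (k b : ℕ) :
    kacOperator k (X ^ b : R[X]) = C (b : R) * X ^ (b - 1) + C ((k : R) - b) * X ^ (b + 1) := by
  rw [kacOperator_apply, derivative_X_pow]
  rcases b with _ | b
  · simp
  · simp only [Nat.add_sub_cancel, map_sub, C_add, C_1, Nat.cast_add, Nat.cast_one]
    ring

noncomputable def kacEigenpoly (k m : ℕ) : R[X] := (1 + X) ^ m * (1 - X) ^ (k - m)

lemma coeff_zero_kacEigenpoly (k m : ℕ) : (kacEigenpoly k m : R[X]).coeff 0 = 1 := by
  simp [kacEigenpoly, coeff_zero_eq_eval_zero]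

lemma natDegree_kacEigenpoly_le (k m : ℕ) (hm : m ≤ k) :
    (kacEigenpoly k m : R[X]).natDegree ≤ k := by
  have : (kacEigenpoly k m : R[X]).natDegree ≤ m + (k - m) := by
    rw [kacEigenpoly]
    compute_degree
  omega

lemma kacOperator_kacEigenpoly (k m : ℕ) (hm : m ≤ k) :
    kacOperator k (kacEigenpoly k m : R[X]) = C (2 * (m : R) - k) * kacEigenpoly k m := by
  obtain ⟨j, rfl⟩ := Nat.exists_eq_add_of_le hm
  rw [kacEigenpoly, Nat.add_sub_cancel_left, kacOperator_apply]
  rcases m with _ | m <;> rcases j with _ | j <;>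
    simp [derivative_mul, derivative_pow_succ, map_ofNat] <;> ring

def kacMatrix (k : ℕ) : Matrix (Fin (k + 1)) (Fin (k + 1)) R :=
  of fun a b => if (a : ℕ) + 1 = b then (b : R) else if (b : ℕ) + 1 = a then (k : R) - b else 0

lemma kacMatrix_eq_of_coeff_kacOperator (k : ℕ) :
    kacMatrix k = of fun a b : Fin (k + 1) => (kacOperator k (X ^ (b : ℕ) : R[X])).coeff a := by
  ext a b
  simp only [kacMatrix, of_apply, kacOperator_X_pow, coeff_add, coeff_C_mul, coeff_X_pow]
  split_ifs <;> first | omega | simp [show (b : ℕ) = 0 by omega] | simp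

lemma kacMatrix_mulVec_coeff_kacEigenpoly (k m : ℕ) (hm : m ≤ k) :
    kacMatrix k *ᵥ (fun b : Fin (k + 1) => (kacEigenpoly k m : R[X]).coeff b)
      = (2 * (m : R) - k) • fun b : Fin (k + 1) => (kacEigenpoly k m : R[X]).coeff b := by
  rw [kacMatrix_eq_of_coeff_kacOperator,
    mulVec_coeff_eq_coeff_linearMap_apply _ (Nat.lt_succ_of_le (natDegree_kacEigenpoly_le k m hm)),
    kacOperator_kacEigenpoly k m hm]
  ext b
  rw [coeff_C_mul]
  rfl

end Kac

theorem Real.sqrt_natCast_mul_sqrt_natCast_of_mul_eq {x y t z : ℕ} (h : x * y = t * t * z) :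
    √(x : ℝ) * √(y : ℝ) = t * √(z : ℝ) := by
  rw [← Real.sqrt_mul (Nat.cast_nonneg _), ← Nat.cast_mul, h, Nat.cast_mul,
    Real.sqrt_mul (by positivity), Nat.cast_mul, Real.sqrt_mul_self (Nat.cast_nonneg _)]

lemma sqrt_choose_ne_zero (k : ℕ) (a : Fin (k + 1)) : √(k.choose a : ℝ) ≠ 0 :=
  (Real.sqrt_pos.2 (Nat.cast_pos.2 (Nat.choose_pos (Nat.lt_succ_iff.1 a.2)))).ne'

lemma hopH_eq_diagonal_inv_mul_kacMatrix_mul_diagonal (k : ℕ) :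
    hopH k = diagonal (fun a : Fin (k + 1) => √(k.choose a : ℝ))⁻¹ * kacMatrix k
      * diagonal fun a : Fin (k + 1) => √(k.choose a : ℝ) := by
  ext a b
  rw [mul_diagonal, diagonal_mul, Pi.inv_apply, hopH, kacMatrix, of_apply]
  split_ifs with h₁ h₂
  · rw [mul_assoc, eq_inv_mul_iff_mul_eq₀ (sqrt_choose_ne_zero k a), ← h₁]
    apply Real.sqrt_natCast_mul_sqrt_natCast_of_mul_eq
    linear_combination (↑a + 1) * (Nat.choose_succ_right_eq k a).symm
  · rw [mul_assoc, eq_inv_mul_iff_mul_eq₀ (sqrt_choose_ne_zero k a), ← h₂,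
      ← Nat.cast_sub (by omega : (b : ℕ) ≤ k)]
    apply Real.sqrt_natCast_mul_sqrt_natCast_of_mul_eq
    linear_combination (k - ↑b) * Nat.choose_succ_right_eq k b
  · simp

open Polynomial in
theorem charpoly_hopH (k : ℕ) :
    (hopH k).charpoly = ∏ m ∈ Finset.range (k+1), (X - C (2 * (m : ℝ) - (k : ℝ))) := by
  have hμ : Function.Injective fun m : Fin (k + 1) => 2 * (m : ℝ) - k := fun m m' h =>
    Fin.ext (by simpa using h)
  have hv0 (m : Fin (k + 1)) : (fun b : Fin (k + 1) => (kacEigenpoly k m : ℝ[X]).coeff b) ≠ 0 :=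
    fun h => by simpa [coeff_zero_kacEigenpoly] using congrFun h 0
  rw [hopH_eq_diagonal_inv_mul_kacMatrix_mul_diagonal,
    charpoly_diagonal_inv_mul_mul_diagonal _ (sqrt_choose_ne_zero k),
    charpoly_eq_prod_of_mulVec_eq_smul _ hμ _ hv0
      fun m => kacMatrix_mulVec_coeff_kacEigenpoly k m (Nat.lt_succ_iff.1 m.2)]
  exact Fin.prod_univ_eq_prod_range (fun m => X - C (2 * (m : ℝ) - k)) (k + 1)
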